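/- arXiv:1906.11719 — 5 statements merged into one kernel-verified Lean document; each statement's English description precedes it below -/
import Mathlib

section
/- Let G be a finite group, N a normal subgroup of G, θ a G-invariant irreducible complex character of N, and P a projective representation of G associated with θ whose factor set takes only root-of-unity values. Then for every g ∈ G the matrix P(g) has finite multiplicative order: there is a positive integer k with P(g)^k equal to the identity matrix. -/
/-!
Iterating `P g * P h = α g h • P (g * h)` gives `P g ^ m = c • P (g ^ m)` with `c` a product of
values of `α`, hence a root of unity. Taking `m` the order of `g` and using `P 1 = 1` (the
restriction to `N` is multiplicative), `P g ^ m` is a root of unity times the identity.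
-/

section ProjectiveMap

variable {G R M : Type*} [Monoid G] [CommMonoid R] [Monoid M] [MulAction R M] [IsScalarTower R M M]
  (P : G → M) (α : G → G → R)

theorem exists_isOfFinOrder_and_pow_succ_eq_smul (hfac : ∀ g h, P g * P h = α g h • P (g * h))
    (hα : ∀ g h, IsOfFinOrder (α g h)) (g : G) (k : ℕ) :
    ∃ c : R, IsOfFinOrder c ∧ P g ^ (k + 1) = c • P (g ^ (k + 1)) := by
  induction k with
  | zero => exact ⟨1, IsOfFinOrder.one, by simp⟩
  | succ k ih =>
    obtain ⟨c, hc, hpow⟩ := ih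
    refine ⟨c * α (g ^ (k + 1)) g, hc.mul (hα _ _), ?_⟩
    rw [pow_succ, hpow, smul_mul_assoc, hfac, smul_smul, ← pow_succ]

theorem isOfFinOrder_apply_of_mul_eq_smul (hfac : ∀ g h, P g * P h = α g h • P (g * h))
    (hα : ∀ g h, IsOfFinOrder (α g h)) (hP1 : P 1 = 1) {g : G} (hg : IsOfFinOrder g) :
    IsOfFinOrder (P g) := by
  obtain ⟨m, hm, hgm⟩ := isOfFinOrder_iff_pow_eq_one.mp hg
  obtain ⟨k, rfl⟩ := Nat.exists_eq_succ_of_ne_zero hm.ne'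
  obtain ⟨c, hc, hpow⟩ := exists_isOfFinOrder_and_pow_succ_eq_smul P α hfac hα g k
  have hscalar : P g ^ (k + 1) = MonoidHom.smulOneHom c := by
    rw [hpow, hgm, hP1]
    rfl
  exact .of_pow (hscalar ▸ MonoidHom.smulOneHom.isOfFinOrder hc) k.succ_ne_zero

end ProjectiveMap

theorem projectiveRep_associated_matrix_finite_order_general
    {G : Type*} [Group G] [Finite G] (N : Subgroup G)
    (d : ℕ)
    (P : G → Matrix (Fin d) (Fin d) ℂ) (α : G → G → ℂ)
    -- `P` is a projective representation of `G` with factor set `α` :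
    (hPinv : ∀ g, IsUnit (P g))
    (hfac : ∀ g h, P g * P h = α g h • P (g * h))
    -- `P` is associated with `θ` : its restriction to `N` is a multiplicative irreducible
    -- representation with trace `θ`, and `P (n*g) = P n * P g`, `P (g*n) = P g * P n` :
    (hres : ∀ n m : ↥N, P ((n : G) * (m : G)) = P (n : G) * P (m : G))
    -- the factor set takes only root-of-unity values :
    (hroot : ∀ g h, ∃ k : ℕ, 0 < k ∧ α g h ^ k = 1) :
    ∀ g : G, ∃ k : ℕ, 0 < k ∧ P g ^ k = 1 := by
  have hP1 : P 1 = 1 := by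
    have h := hres 1 1
    rw [OneMemClass.coe_one, mul_one, eq_comm] at h
    exact (hPinv 1).mul_eq_left.mp h
  intro g
  exact isOfFinOrder_iff_pow_eq_one.mp <| isOfFinOrder_apply_of_mul_eq_smul P α hfac
    (fun g h => isOfFinOrder_iff_pow_eq_one.mpr (hroot g h)) hP1 (isOfFinOrder_of_finite g)

/-- Let `N ⊴ G` be finite groups, `θ` a `G`-invariant irreducible complex
character of `N`, and `P` a projective representation of `G` associated with `θ` whose factor set
takes only root-of-unity values.  Then every matrix `P g` has finite multiplicative order. -/
theorem projectiveRep_associated_matrix_finite_order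
    {G : Type*} [Group G] [Finite G] (N : Subgroup G) (hN : N.Normal)
    (d : ℕ) (hd : 0 < d) (θ : ↥N → ℂ)
    (P : G → Matrix (Fin d) (Fin d) ℂ) (α : G → G → ℂ)
    -- `P` is a projective representation of `G` with factor set `α` :
    (hPinv : ∀ g, IsUnit (P g))
    (hα : ∀ g h, α g h ≠ 0)
    (hfac : ∀ g h, P g * P h = α g h • P (g * h))
    -- `P` is associated with `θ` : its restriction to `N` is a multiplicative irreducible
    -- representation with trace `θ`, and `P (n*g) = P n * P g`, `P (g*n) = P g * P n` :
    (hres : ∀ n m : ↥N, P ((n : G) * (m : G)) = P (n : G) * P (m : G))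
    (hirr : ∀ W : Submodule ℂ (Fin d → ℂ),
      (∀ n : ↥N, ∀ v ∈ W, (P (n : G)).mulVec v ∈ W) → W = ⊥ ∨ W = ⊤)
    (htr : ∀ n : ↥N, (P (n : G)).trace = θ n)
    (hleft : ∀ (n : ↥N) (g : G), P ((n : G) * g) = P (n : G) * P g)
    (hright : ∀ (n : ↥N) (g : G), P (g * (n : G)) = P g * P (n : G))
    -- `θ` is `G`-invariant :
    (hGinv : ∀ (g : G) (n : ↥N), θ ⟨g * (n : G) * g⁻¹, hN.conj_mem (n : G) n.2 g⟩ = θ n)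
    -- the factor set takes only root-of-unity values :
    (hroot : ∀ g h, ∃ k : ℕ, 0 < k ∧ α g h ^ k = 1) :
    ∀ g : G, ∃ k : ℕ, 0 < k ∧ P g ^ k = 1 :=
  projectiveRep_associated_matrix_finite_order_general N d P α hPinv hfac hres hroot
end

section
/- Let G be a finite group, N a normal subgroup of G, θ an irreducible complex character of N, and P a projective representation of G associated with θ. Suppose μ, μ₁ : G → ℂ∖{0} are constant on cosets of N and satisfy μ(n) = μ₁(n) = 1 for all n ∈ N, and M, M₁ are invertible complex matrices such that μ(g)·M⁻¹·P(g)·M = μ₁(g)·M₁⁻¹·P(g)·M₁ for all g ∈ G. Then μ = μ₁, and moreover M₁ = λ·M for some nonzero complex number λ. -/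
/-!
`A := M₁ * M⁻¹` commutes with every `P n`, `n ∈ N`, because `μ` and `μ₁` are `1` on `N`.
By Schur's lemma `A = λ • 1`, i.e. `M₁ = λ • M`; conjugation by `M₁` and by `M` then agree,
and cancelling the invertible matrix `M⁻¹ * P g * M` gives `μ g = μ₁ g`.
-/

namespace Matrix

variable {n K : Type*} [Fintype n] [DecidableEq n]

theorem exists_eq_smul_one_of_forall_commute [Field K] [IsAlgClosed K] [Nonempty n]
    {ι : Type*} (S : ι → Matrix n n K)
    (hirr : ∀ W : Submodule K (n → K), (∀ i, ∀ v ∈ W, S i *ᵥ v ∈ W) → W = ⊥ ∨ W = ⊤)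
    (A : Matrix n n K) (hA : ∀ i, Commute A (S i)) : ∃ c : K, A = c • 1 := by
  obtain ⟨c, hc⟩ := Module.End.exists_eigenvalue A.mulVecLin
  have hinv : ∀ i, ∀ v ∈ Module.End.eigenspace A.mulVecLin c,
      S i *ᵥ v ∈ Module.End.eigenspace A.mulVecLin c := by
    intro i v hv
    rw [Module.End.mem_eigenspace_iff] at hv ⊢
    change A *ᵥ v = c • v at hv
    change A *ᵥ (S i *ᵥ v) = c • (S i *ᵥ v)
    rw [mulVec_mulVec, (hA i).eq, ← mulVec_mulVec, hv, mulVec_smul]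
  have htop := (hirr _ hinv).resolve_left hc
  refine ⟨c, toLin'.injective (LinearMap.ext fun v => ?_)⟩
  have hv := Module.End.mem_eigenspace_iff.mp (htop ▸ Submodule.mem_top : v ∈ _)
  simpa [smul_mulVec] using hv

theorem commute_mul_nonsing_inv_of_conj_eq [CommRing K] {M M₁ X : Matrix n n K}
    (hM : IsUnit M) (hM₁ : IsUnit M₁) (h : M⁻¹ * X * M = M₁⁻¹ * X * M₁) :
    Commute (M₁ * M⁻¹) X := by
  have hMd := (isUnit_iff_isUnit_det M).mp hM
  have hM₁d := (isUnit_iff_isUnit_det M₁).mp hM₁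
  calc M₁ * M⁻¹ * X = M₁ * (M⁻¹ * X * M) * M⁻¹ := by
        simp only [Matrix.mul_assoc, mul_nonsing_inv _ hMd, Matrix.mul_one]
    _ = X * (M₁ * M⁻¹) := by
        rw [h]
        simp only [← Matrix.mul_assoc, mul_nonsing_inv _ hM₁d, Matrix.one_mul]

theorem smul_inv_mul_mul_smul [Field K] {M X : Matrix n n K} (hM : IsUnit M) {c : K}
    (hc : c ≠ 0) : (c • M)⁻¹ * X * (c • M) = M⁻¹ * X * M := by
  have hinv : (c • M)⁻¹ = c⁻¹ • M⁻¹ := inv_eq_left_inv <| by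
    rw [Matrix.smul_mul, Matrix.mul_smul, smul_smul, inv_mul_cancel₀ hc, one_smul,
      nonsing_inv_mul _ ((isUnit_iff_isUnit_det M).mp hM)]
  rw [hinv, Matrix.smul_mul, Matrix.smul_mul, Matrix.mul_smul, smul_smul, inv_mul_cancel₀ hc,
    one_smul]

end Matrix

theorem projectiveRep_mu_unique_general
    {G : Type*} [Group G] (N : Subgroup G)
    (d : ℕ) (hd : 0 < d)
    (P : G → Matrix (Fin d) (Fin d) ℂ)
    -- `P` is a projective representation of `G` with factor set `α` :
    (hPinv : ∀ g, IsUnit (P g))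
    -- `P` is associated with `θ` :
    (hirr : ∀ W : Submodule ℂ (Fin d → ℂ),
      (∀ n : ↥N, ∀ v ∈ W, (P (n : G)).mulVec v ∈ W) → W = ⊥ ∨ W = ⊤)
    -- the functions `μ` and `μ₁` :
    (μ μ₁ : G → ℂ)
    (hμN : ∀ n : ↥N, μ (n : G) = 1) (hμ₁N : ∀ n : ↥N, μ₁ (n : G) = 1)
    (M M₁ : Matrix (Fin d) (Fin d) ℂ)
    (hM : IsUnit M) (hM₁ : IsUnit M₁)
    (heq : ∀ g : G, μ g • (M⁻¹ * P g * M) = μ₁ g • (M₁⁻¹ * P g * M₁)) :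
    μ = μ₁ ∧ ∃ lam : ℂ, lam ≠ 0 ∧ M₁ = lam • M := by
  have : Nonempty (Fin d) := ⟨⟨0, hd⟩⟩
  obtain ⟨c, hc⟩ := Matrix.exists_eq_smul_one_of_forall_commute (fun n : N => P n) hirr
    (M₁ * M⁻¹) fun n => Matrix.commute_mul_nonsing_inv_of_conj_eq hM hM₁ <| by
      simpa only [hμN, hμ₁N, one_smul] using heq n
  have hM₁c : M₁ = c • M := by
    rw [← Matrix.nonsing_inv_mul_cancel_right (A := M) M₁
      ((Matrix.isUnit_iff_isUnit_det M).mp hM), hc, Matrix.smul_mul, Matrix.one_mul]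
  have hc0 : c ≠ 0 := by
    rintro rfl
    rw [zero_smul] at hM₁c
    exact not_isUnit_zero (hM₁c ▸ hM₁)
  refine ⟨funext fun g => ?_, c, hc0, hM₁c⟩
  have hconj_unit : IsUnit (M⁻¹ * P g * M) :=
    (((Matrix.isUnit_nonsing_inv_iff ..).mpr hM).mul (hPinv g)).mul hM
  have hg := heq g
  rw [hM₁c, Matrix.smul_inv_mul_mul_smul hM hc0] at hg
  exact smul_left_injective ℂ hconj_unit.ne_zero hg

/-- uniqueness of the function `μ`, Remark 1.3 of the paper.
Let `N ⊴ G`, `θ` an irreducible complex character of `N`, `P` a projective representation of `G`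
associated with `θ`.  If `μ, μ₁ : G → ℂ∖{0}` are constant on cosets of `N`, take the value `1`
on `N`, and `M, M₁` are invertible matrices with
`μ g • (M⁻¹ * P g * M) = μ₁ g • (M₁⁻¹ * P g * M₁)` for all `g`, then `μ = μ₁` and
`M₁ = λ • M` for some nonzero scalar `λ`. -/
theorem projectiveRep_mu_unique
    {G : Type*} [Group G] [Finite G] (N : Subgroup G) (hN : N.Normal)
    (d : ℕ) (hd : 0 < d) (θ : ↥N → ℂ)
    (P : G → Matrix (Fin d) (Fin d) ℂ) (α : G → G → ℂ)
    -- `P` is a projective representation of `G` with factor set `α` :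
    (hPinv : ∀ g, IsUnit (P g))
    (hα : ∀ g h, α g h ≠ 0)
    (hfac : ∀ g h, P g * P h = α g h • P (g * h))
    -- `P` is associated with `θ` :
    (hres : ∀ n m : ↥N, P ((n : G) * (m : G)) = P (n : G) * P (m : G))
    (hirr : ∀ W : Submodule ℂ (Fin d → ℂ),
      (∀ n : ↥N, ∀ v ∈ W, (P (n : G)).mulVec v ∈ W) → W = ⊥ ∨ W = ⊤)
    (htr : ∀ n : ↥N, (P (n : G)).trace = θ n)
    (hleft : ∀ (n : ↥N) (g : G), P ((n : G) * g) = P (n : G) * P g)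
    (hright : ∀ (n : ↥N) (g : G), P (g * (n : G)) = P g * P (n : G))
    -- the functions `μ` and `μ₁` :
    (μ μ₁ : G → ℂ)
    (hμ0 : ∀ g, μ g ≠ 0) (hμ₁0 : ∀ g, μ₁ g ≠ 0)
    (hμcoset : ∀ (n : ↥N) (g : G), μ ((n : G) * g) = μ g)
    (hμ₁coset : ∀ (n : ↥N) (g : G), μ₁ ((n : G) * g) = μ₁ g)
    (hμN : ∀ n : ↥N, μ (n : G) = 1) (hμ₁N : ∀ n : ↥N, μ₁ (n : G) = 1)
    (M M₁ : Matrix (Fin d) (Fin d) ℂ)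
    (hM : IsUnit M) (hM₁ : IsUnit M₁)
    (heq : ∀ g : G, μ g • (M⁻¹ * P g * M) = μ₁ g • (M₁⁻¹ * P g * M₁)) :
    μ = μ₁ ∧ ∃ lam : ℂ, lam ≠ 0 ∧ M₁ = lam • M :=
  projectiveRep_mu_unique_general N d hd P hPinv hirr μ μ₁ hμN hμ₁N M M₁ hM hM₁ heq
end

section
/- Let G be a finite group, N a normal subgroup of G, and θ an irreducible complex character of N with stabilizer G_θ. Let g ∈ G and let σ be a ring automorphism of ℂ such that θ^{gσ} = θ. Let P be a projective representation of G_θ associated with θ, with factor set α. Then: (i) conjugation by g maps G_θ onto itself; (ii) the map P^{gσ} defined on G_θ by P^{gσ}(x) = σ(P(g·x·g⁻¹)) (σ applied entrywise) is a projective representation of G_θ associated with θ, with factor set (x,y) ↦ σ(α(g·x·g⁻¹, g·y·g⁻¹)); (iii) there exists a unique function μ : G_θ → ℂ∖{0} with μ(1) = 1 and μ constant on cosets of N such that for some invertible complex matrix M one has P^{gσ}(x) = μ(x)·M⁻¹·P(x)·M for all x ∈ G_θ. -/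
/-!
Conjugating by `g` and applying `σ` entrywise preserves multiplicativity, irreducibility and
factor sets, while `θ^{gσ} = θ` says that the character on `N` is unchanged; hence `g` normalizes
`G_θ` and `P^{gσ}` is again a projective representation of `G_θ` associated with `θ`.
Two irreducible representations of `N` with the same character are equivalent (orthogonality of
characters), so some invertible `M` satisfies `P n * M = M * P^{gσ} n` on `N`. For `x ∈ G_θ`,
both `P x * M` and `M * P^{gσ} x` intertwine `P|_N` with `n ↦ P^{gσ}(x⁻¹ n x)`, so by Schur's
lemma they differ by a scalar `μ x`. The same argument shows that `M` is unique up to a scalar,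
which makes `μ` unique.
-/

/-- The stabilizer `G_θ` of a character `θ` of a normal subgroup `N` of `G`, as a set:
the set of `x ∈ G` with `θ(x n x⁻¹) = θ n` for all `n ∈ N`. -/
def charStabSet {G : Type*} [Group G] (N : Subgroup G) (hN : N.Normal) (θ : ↥N → ℂ) : Set G :=
  {x : G | ∀ n : ↥N, θ ⟨x * (n : G) * x⁻¹, hN.conj_mem (n : G) n.2 x⟩ = θ n}

namespace Matrix

variable {K n : Type*} [Field K] [Fintype n]

def IsIrreducibleFamily {ι : Type*} (ρ : ι → Matrix n n K) : Prop :=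
  ∀ W : Submodule K (n → K), (∀ i, ∀ v ∈ W, ρ i *ᵥ v ∈ W) → W = ⊥ ∨ W = ⊤

theorem IsIrreducibleFamily.comp {ι κ : Type*} {ρ : ι → Matrix n n K}
    (hρ : IsIrreducibleFamily ρ) {f : κ → ι} (hf : f.Surjective) : IsIrreducibleFamily (ρ ∘ f) :=
  fun W hW => hρ W fun i v hv => by
    obtain ⟨j, rfl⟩ := hf i
    exact hW j v hv

section

attribute [local instance] RingHomInvPair.of_ringEquiv RingHomInvPair.of_ringEquiv_symm

def _root_.RingEquiv.piSemilinearEquiv (σ : K ≃+* K) (n : Type*) :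
    (n → K) ≃ₛₗ[(σ : K →+* K)] (n → K) where
  toFun v := σ ∘ v
  invFun v := σ.symm ∘ v
  map_add' v w := by ext; simp
  map_smul' c v := by ext; simp
  left_inv v := by ext; simp
  right_inv v := by ext; simp

theorem IsIrreducibleFamily.map {ι : Type*} {ρ : ι → Matrix n n K} (hρ : IsIrreducibleFamily ρ)
    (σ : K ≃+* K) : IsIrreducibleFamily fun i => (ρ i).map σ := by
  intro W hW
  let e := σ.piSemilinearEquiv n
  have hinv : ∀ i, ∀ v ∈ W.comap e.toLinearMap, ρ i *ᵥ v ∈ W.comap e.toLinearMap := by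
    intro i v hv
    have hσ : e (ρ i *ᵥ v) = (ρ i).map σ *ᵥ e v := funext (RingHom.map_mulVec (σ : K →+* K) _ _)
    simpa [hσ] using hW i _ hv
  have hW' := Submodule.orderIsoMapComap_symm_apply e W
  rcases hρ _ hinv with h | h
  · exact .inl ((map_eq_bot_iff (Submodule.orderIsoMapComap e).symm).mp (hW'.trans h))
  · exact .inr ((map_eq_top_iff (Submodule.orderIsoMapComap e).symm).mp (hW'.trans h))

end

variable [DecidableEq n]

theorem eq_smul_inv_mul_mul_iff {M A B : Matrix n n K} (hM : IsUnit M) {c : K} :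
    B = c • (M⁻¹ * A * M) ↔ M * B = c • (A * M) := by
  have hM' := (isUnit_iff_isUnit_det M).mp hM
  constructor
  · rintro rfl
    rw [mul_smul_comm, ← Matrix.mul_assoc, ← Matrix.mul_assoc, mul_nonsing_inv _ hM',
      Matrix.one_mul]
  · intro h
    rw [← nonsing_inv_mul_cancel_left M B hM', h, mul_smul_comm, Matrix.mul_assoc]

variable {H : Type*} [Group H]

def toRepresentation (ρ : H →* Matrix n n K) : Representation K H (n → K) :=
  (toLinAlgEquiv' : Matrix n n K ≃ₐ[K] _).toMonoidHom.comp ρ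

variable (ρ : H →* Matrix n n K)

@[simp]
theorem toRepresentation_apply (h : H) (v : n → K) : toRepresentation ρ h v = ρ h *ᵥ v := rfl

@[simp]
theorem character_toRepresentation (h : H) : (toRepresentation ρ).character h = (ρ h).trace :=
  trace_toLin'_eq _

variable {ρ}

theorem IsIrreducibleFamily.isIrreducible_toRepresentation [Nonempty n]
    (hρ : IsIrreducibleFamily ⇑ρ) : (toRepresentation ρ).IsIrreducible where
  exists_pair_ne := ⟨⊥, ⊤, fun h => bot_ne_top (α := Submodule K (n → K))
    (congrArg Subrepresentation.toSubmodule h)⟩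
  eq_bot_or_eq_top W := (hρ W.toSubmodule fun h _ hv => W.apply_mem_toSubmodule h hv).imp
    (fun hW => Subrepresentation.toSubmodule_injective hW)
    (fun hW => Subrepresentation.toSubmodule_injective hW)

theorem IsIrreducibleFamily.exists_eq_smul_one [IsAlgClosed K] [Nonempty n]
    (hρ : IsIrreducibleFamily ⇑ρ) {T : Matrix n n K} (hT : ∀ h, ρ h * T = T * ρ h) :
    ∃ c : K, T = c • 1 := by
  have := hρ.isIrreducible_toRepresentation
  let f : Representation.IntertwiningMap (toRepresentation ρ) (toRepresentation ρ) :=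
    (toLin' T).intertwiningMap_of_isIntertwiningMap _ _ fun h v => by
      simp [mulVec_mulVec, hT]
  obtain ⟨c, hc⟩ :=
    Representation.IsIrreducible.algebraMap_intertwiningMap_bijective_of_isAlgClosed.2 f
  refine ⟨c, toLin'.injective (LinearMap.ext fun v => ?_)⟩
  have hv : f v = c • v := by simpa using (DFunLike.congr_fun hc v).symm
  simp only [toLin'_apply, smul_mulVec, one_mulVec]
  exact hv

theorem IsIrreducibleFamily.exists_eq_smul_of_intertwining [IsAlgClosed K] [Nonempty n]
    (hρ : IsIrreducibleFamily ⇑ρ) {ρ' : H → Matrix n n K} {A B : Matrix n n K} (hA : IsUnit A)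
    (hAρ : ∀ h, ρ h * A = A * ρ' h) (hBρ : ∀ h, ρ h * B = B * ρ' h) : ∃ c : K, B = c • A := by
  have hA' : IsUnit A.det := (isUnit_iff_isUnit_det A).mp hA
  have hcomm : ∀ h, ρ h * (B * A⁻¹) = B * A⁻¹ * ρ h := fun h => by
    have hρ' : ρ' h * A⁻¹ = A⁻¹ * ρ h :=
      calc ρ' h * A⁻¹ = A⁻¹ * (A * ρ' h) * A⁻¹ := by rw [nonsing_inv_mul_cancel_left _ _ hA']
        _ = A⁻¹ * ρ h := by rw [← hAρ, ← Matrix.mul_assoc, mul_nonsing_inv_cancel_right _ _ hA']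
    rw [← Matrix.mul_assoc, hBρ, Matrix.mul_assoc, hρ', Matrix.mul_assoc]
  obtain ⟨c, hc⟩ := hρ.exists_eq_smul_one hcomm
  exact ⟨c, by rw [← nonsing_inv_mul_cancel_right A B hA', hc, smul_mul_assoc, Matrix.one_mul]⟩

theorem exists_intertwining_of_trace_eq [Finite H] [IsAlgClosed K] [CharZero K] [Nonempty n]
    {ρ₁ ρ₂ : H →* Matrix n n K} (h₁ : IsIrreducibleFamily ⇑ρ₁) (h₂ : IsIrreducibleFamily ⇑ρ₂)
    (htr : ∀ h, (ρ₁ h).trace = (ρ₂ h).trace) :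
    ∃ M : Matrix n n K, IsUnit M ∧ ∀ h, ρ₁ h * M = M * ρ₂ h := by
  have := Fintype.ofFinite H
  have : Invertible (Nat.card H : K) := invertibleOfNonzero (Nat.cast_ne_zero.mpr Nat.card_pos.ne')
  have := h₁.isIrreducible_toRepresentation
  have := h₂.isIrreducible_toRepresentation
  -- orthogonality: `⟨χ₁, χ₂⟩ = ⟨χ₁, χ₁⟩ = 1`, which forces `ρ₂ ≅ ρ₁`
  have hequiv : Nonempty ((toRepresentation ρ₂).Equiv (toRepresentation ρ₁)) := by
    have h12 := Representation.char_orthonormal (toRepresentation ρ₁) (toRepresentation ρ₂)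
    have h11 := Representation.char_orthonormal (toRepresentation ρ₁) (toRepresentation ρ₁)
    simp only [character_toRepresentation, ← htr] at h12 h11
    rw [h11, if_pos ⟨Representation.Equiv.refl _⟩] at h12
    by_contra h
    simp [h] at h12
  obtain ⟨e⟩ := hequiv
  refine ⟨LinearMap.toMatrix' e.toLinearEquiv.toLinearMap, ?_, fun h => ?_⟩
  · exact LinearMap.isUnit_toMatrix'_iff.mpr
      ((Module.End.isUnit_iff _).mpr e.toLinearEquiv.bijective)
  · refine toLin'.injective (LinearMap.ext fun v => ?_)
    have := Representation.IntertwiningMap.isIntertwining _ _ e.toIntertwiningMap h v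
    simp only [toRepresentation_apply] at this
    simpa using this.symm

end Matrix

section CharStab

variable {G : Type*} [Group G] {N : Subgroup G} [hN : N.Normal] {θ : N → ℂ}

theorem mem_charStabSet_iff {x : G} :
    x ∈ charStabSet N hN θ ↔ ∀ a, θ (MulAut.conjNormal x a) = θ a :=
  Iff.rfl

variable (N) in
def charStab (θ : N → ℂ) : Subgroup G where
  carrier := charStabSet N hN θ
  one_mem' := mem_charStabSet_iff.2 fun a => by simp
  mul_mem' {x y} hx hy := mem_charStabSet_iff.2 fun a => by
    rw [map_mul, MulAut.mul_apply, mem_charStabSet_iff.1 hx, mem_charStabSet_iff.1 hy]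
  inv_mem' {x} hx := mem_charStabSet_iff.2 fun a => by
    rw [← mem_charStabSet_iff.1 hx (MulAut.conjNormal x⁻¹ a)]
    simp

theorem mem_charStab_iff {x : G} : x ∈ charStab N θ ↔ ∀ a, θ (MulAut.conjNormal x a) = θ a :=
  Iff.rfl

theorem conj_mem_charStab {g x : G} {σ : ℂ ≃+* ℂ}
    (hgσ : ∀ a, σ (θ (MulAut.conjNormal g a)) = θ a) (hx : x ∈ charStab N θ) :
    g * x * g⁻¹ ∈ charStab N θ := by
  have hg : ∀ b, σ (θ b) = θ (MulAut.conjNormal g⁻¹ b) := fun b => by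
    simpa using hgσ (MulAut.conjNormal g⁻¹ b)
  refine mem_charStab_iff.2 fun a => σ.injective ?_
  rw [hg, hg, ← MulAut.mul_apply, ← map_mul, show g⁻¹ * (g * x * g⁻¹) = x * g⁻¹ by group,
    map_mul, MulAut.mul_apply, mem_charStab_iff.1 hx]

theorem mem_normalizer_charStab {g : G} {σ : ℂ ≃+* ℂ}
    (hgσ : ∀ a, σ (θ (MulAut.conjNormal g a)) = θ a) :
    g ∈ Subgroup.normalizer (charStab N θ : Set G) := by
  have hgσ' : ∀ a, σ.symm (θ (MulAut.conjNormal g⁻¹ a)) = θ a := fun a => by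
    simpa [RingEquiv.symm_apply_eq] using (hgσ (MulAut.conjNormal g⁻¹ a)).symm
  refine Subgroup.mem_normalizer_iff.2 fun x => ⟨conj_mem_charStab hgσ, fun hx => ?_⟩
  simpa [mul_assoc] using conj_mem_charStab hgσ' hx

end CharStab

section ProjectiveRep

variable {G K n : Type*} [Group G] [Field K] [Fintype n]

structure IsProjectiveRep [DecidableEq n] (H : Subgroup G) (P : G → Matrix n n K)
    (α : G → G → K) : Prop where
  isUnit : ∀ x ∈ H, IsUnit (P x)
  mul_eq_smul : ∀ x ∈ H, ∀ y ∈ H, P x * P y = α x y • P (x * y)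

structure IsAssociated (N H : Subgroup G) (θ : N → K) (P : G → Matrix n n K) : Prop where
  map_mul : ∀ a b : N, P ((a : G) * (b : G)) = P a * P b
  irreducible : Matrix.IsIrreducibleFamily fun a : N => P a
  trace_eq : ∀ a : N, (P a).trace = θ a
  mul_left : ∀ a : N, ∀ x ∈ H, P (a * x) = P a * P x
  mul_right : ∀ a : N, ∀ x ∈ H, P (x * a) = P x * P a

/-- The paper's `P^{gσ}`. -/
def galoisConj (g : G) (σ : K ≃+* K) (P : G → Matrix n n K) (x : G) : Matrix n n K :=
  (P (g * x * g⁻¹)).map σ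

variable {N H : Subgroup G} {θ : N → K} {P Q : G → Matrix n n K} {g : G}

theorem IsProjectiveRep.galoisConj [DecidableEq n] {α : G → G → K} (hP : IsProjectiveRep H P α)
    (hg : g ∈ Subgroup.normalizer (H : Set G)) (σ : K ≃+* K) :
    IsProjectiveRep H (galoisConj g σ P) fun x y => σ (α (g * x * g⁻¹) (g * y * g⁻¹)) where
  isUnit x hx := (hP.isUnit _ ((Subgroup.mem_normalizer_iff.1 hg x).1 hx)).map
    (RingHom.mapMatrix (σ : K →+* K))
  mul_eq_smul x hx y hy := by
    have hgx := (Subgroup.mem_normalizer_iff.1 hg x).1 hx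
    have hgy := (Subgroup.mem_normalizer_iff.1 hg y).1 hy
    simp only [_root_.galoisConj, ← Matrix.map_mul, hP.mul_eq_smul _ hgx _ hgy]
    rw [show g * x * g⁻¹ * (g * y * g⁻¹) = g * (x * y) * g⁻¹ by group]
    ext i j
    simp

namespace IsAssociated

theorem galoisConj [N.Normal] (hP : IsAssociated N H θ P)
    (hg : g ∈ Subgroup.normalizer (H : Set G)) {σ : K ≃+* K}
    (hgσ : ∀ a, σ (θ (MulAut.conjNormal g a)) = θ a) : IsAssociated N H θ (galoisConj g σ P) where
  map_mul a b := by
    simpa [_root_.galoisConj, mul_assoc, ← Matrix.map_mul] using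
      congrArg (Matrix.map · σ) (hP.map_mul (MulAut.conjNormal g a) (MulAut.conjNormal g b))
  irreducible := (hP.irreducible.comp (MulAut.conjNormal g).surjective).map σ
  trace_eq a := by
    rw [← hgσ, ← hP.trace_eq]
    exact (AddMonoidHom.map_trace σ _).symm
  mul_left a x hx := by
    simpa [_root_.galoisConj, mul_assoc, ← Matrix.map_mul] using congrArg (Matrix.map · σ)
      (hP.mul_left (MulAut.conjNormal g a) _ ((Subgroup.mem_normalizer_iff.1 hg x).1 hx))
  mul_right a x hx := by
    simpa [_root_.galoisConj, mul_assoc, ← Matrix.map_mul] using congrArg (Matrix.map · σ)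
      (hP.mul_right (MulAut.conjNormal g a) _ ((Subgroup.mem_normalizer_iff.1 hg x).1 hx))

theorem mul_conj [N.Normal] (hP : IsAssociated N H θ P) {x : G} (hx : x ∈ H) (a : N) :
    P a * P x = P x * P (MulAut.conjNormal x⁻¹ a) := by
  rw [← hP.mul_left a x hx, ← hP.mul_right _ x hx]
  simp [mul_assoc]

variable [DecidableEq n]

theorem map_one (hP : IsAssociated N H θ P) (h1 : IsUnit (P 1)) : P 1 = 1 :=
  (IsIdempotentElem.iff_eq_one_of_isUnit h1).1 <| by
    simpa [IsIdempotentElem] using (hP.map_mul 1 1).symm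

def toMonoidHom (hP : IsAssociated N H θ P) (h1 : P 1 = 1) : N →* Matrix n n K where
  toFun a := P a
  map_one' := h1
  map_mul' := hP.map_mul

theorem le_charStab [N.Normal] {θ : N → ℂ} {P : G → Matrix n n ℂ} (hP : IsAssociated N H θ P)
    (h1 : P 1 = 1) : N ≤ charStab N θ := fun m hm =>
  mem_charStab_iff.2 fun a => by
    rw [← hP.trace_eq, ← hP.trace_eq]
    have := (Matrix.toRepresentation (hP.toMonoidHom h1)).char_conj a ⟨m, hm⟩
    simp only [Matrix.character_toRepresentation] at this
    exact this

theorem exists_intertwining [Finite N] [IsAlgClosed K] [CharZero K] [Nonempty n]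
    (hP : IsAssociated N H θ P) (hQ : IsAssociated N H θ Q) (hP1 : P 1 = 1) (hQ1 : Q 1 = 1) :
    ∃ M : Matrix n n K, IsUnit M ∧ ∀ a : N, P a * M = M * Q a :=
  Matrix.exists_intertwining_of_trace_eq (ρ₁ := hP.toMonoidHom hP1) (ρ₂ := hQ.toMonoidHom hQ1)
    hP.irreducible hQ.irreducible fun a => (hP.trace_eq a).trans (hQ.trace_eq a).symm

theorem exists_smul_of_intertwining [N.Normal] [IsAlgClosed K] [Nonempty n]
    (hP : IsAssociated N H θ P) (hQ : IsAssociated N H θ Q) (hP1 : P 1 = 1) {M : Matrix n n K}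
    (hM : IsUnit M) (hMQ : ∀ a : N, P a * M = M * Q a) {x : G} (hx : x ∈ H) (hPx : IsUnit (P x)) :
    ∃ c : K, M * Q x = c • (P x * M) :=
  Matrix.IsIrreducibleFamily.exists_eq_smul_of_intertwining (ρ := hP.toMonoidHom hP1)
    (ρ' := fun a => Q (MulAut.conjNormal x⁻¹ a)) hP.irreducible (hPx.mul hM)
    (fun a => by
      change P a * (P x * M) = P x * M * Q _
      rw [← Matrix.mul_assoc, hP.mul_conj hx, Matrix.mul_assoc, hMQ, Matrix.mul_assoc])
    (fun a => by
      change P a * (M * Q x) = M * Q x * Q _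
      rw [← Matrix.mul_assoc, hMQ, Matrix.mul_assoc, hQ.mul_conj hx, Matrix.mul_assoc])

theorem exists_eq_smul_of_intertwining [IsAlgClosed K] [Nonempty n] (hP : IsAssociated N H θ P)
    (hP1 : P 1 = 1) {M M' : Matrix n n K} (hM : IsUnit M) (hM' : IsUnit M')
    (hMQ : ∀ a : N, P a * M = M * Q a) (hM'Q : ∀ a : N, P a * M' = M' * Q a) :
    ∃ k : K, k ≠ 0 ∧ M' = k • M := by
  obtain ⟨k, rfl⟩ := Matrix.IsIrreducibleFamily.exists_eq_smul_of_intertwining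
    (ρ := hP.toMonoidHom hP1) hP.irreducible hM hMQ hM'Q
  refine ⟨k, ?_, rfl⟩
  rintro rfl
  simp at hM'

theorem exists_unique_smul_conj [N.Normal] [Finite N] [IsAlgClosed K] [CharZero K] [Nonempty n]
    (hNH : N ≤ H) (hP : IsAssociated N H θ P) (hQ : IsAssociated N H θ Q)
    (hPu : ∀ x ∈ H, IsUnit (P x)) (hQu : ∀ x ∈ H, IsUnit (Q x)) :
    ∃ μ : G → K, (∀ x ∈ H, μ x ≠ 0) ∧ μ 1 = 1 ∧ (∀ a : N, ∀ x ∈ H, μ (a * x) = μ x) ∧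
      (∃ M : Matrix n n K, IsUnit M ∧ ∀ x ∈ H, Q x = μ x • (M⁻¹ * P x * M)) ∧
      ∀ μ' : G → K, μ' 1 = 1 → (∀ a : N, ∀ x ∈ H, μ' (a * x) = μ' x) →
        (∃ M' : Matrix n n K, IsUnit M' ∧ ∀ x ∈ H, Q x = μ' x • (M'⁻¹ * P x * M')) →
        ∀ x ∈ H, μ' x = μ x := by
  have hP1 := hP.map_one (hPu 1 H.one_mem)
  have hQ1 := hQ.map_one (hQu 1 H.one_mem)
  obtain ⟨M, hM, hMQ⟩ := hP.exists_intertwining hQ hP1 hQ1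
  have hex : ∀ x, ∃ c : K, x ∈ H → M * Q x = c • (P x * M) := fun x => by
    by_cases hx : x ∈ H
    · obtain ⟨c, hc⟩ := hP.exists_smul_of_intertwining hQ hP1 hM hMQ hx (hPu x hx)
      exact ⟨c, fun _ => hc⟩
    · exact ⟨1, fun h => absurd h hx⟩
  choose μ hμ using hex
  have hμ_unique : ∀ x ∈ H, ∀ c : K, M * Q x = c • (P x * M) → c = μ x := fun x hx c hc =>
    smul_left_injective K ((hPu x hx).mul hM).ne_zero (hc.symm.trans (hμ x hx))
  refine ⟨μ, fun x hx h0 => ?_, ?_, fun a x hx => ?_,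
    ⟨M, hM, fun x hx => (Matrix.eq_smul_inv_mul_mul_iff hM).2 (hμ x hx)⟩, ?_⟩
  · have := hμ x hx
    rw [h0, zero_smul] at this
    exact (hM.mul (hQu x hx)).ne_zero this
  · exact (hμ_unique 1 H.one_mem 1 (by simp [hP1, hQ1])).symm
  · refine (hμ_unique _ (H.mul_mem (hNH a.2) hx) (μ x) ?_).symm
    rw [hQ.mul_left a x hx, ← Matrix.mul_assoc, ← hMQ, Matrix.mul_assoc, hμ x hx, mul_smul_comm,
      ← Matrix.mul_assoc, ← hP.mul_left a x hx]
  · rintro μ' hμ'1 hμ' ⟨M', hM', hM'Q⟩ x hx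
    have hM'N : ∀ a : N, P a * M' = M' * Q a := fun a => by
      have hμ'a : μ' a = 1 := by simpa [hμ'1] using hμ' a 1 H.one_mem
      have := (Matrix.eq_smul_inv_mul_mul_iff hM').1 (hM'Q a (hNH a.2))
      rw [this, hμ'a, one_smul]
    obtain ⟨k, hk, rfl⟩ := hP.exists_eq_smul_of_intertwining hP1 hM hM' hMQ hM'N
    refine hμ_unique x hx _ (smul_right_injective _ hk ?_)
    have := (Matrix.eq_smul_inv_mul_mul_iff hM').1 (hM'Q x hx)
    rwa [smul_mul_assoc, mul_smul_comm, smul_comm] at this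

end IsAssociated

end ProjectiveRep

theorem projectiveRep_conj_galois_twist_general
    {G : Type*} [Group G] [Finite G] (N : Subgroup G) (hN : N.Normal)
    (d : ℕ) (hd : 0 < d) (θ : ↥N → ℂ)
    -- the stabilizer `G_θ` :
    (S : Set G) (hS : S = charStabSet N hN θ)
    -- `g ∈ G` and the ring automorphism `σ` of `ℂ` satisfy `θ^{gσ} = θ` :
    (g : G) (σ : ℂ ≃+* ℂ)
    (hgσ : ∀ n : ↥N, σ (θ ⟨g * (n : G) * g⁻¹, hN.conj_mem (n : G) n.2 g⟩) = θ n)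
    -- `P` is a projective representation of `G_θ` with factor set `α`, associated with `θ` :
    (P : G → Matrix (Fin d) (Fin d) ℂ) (α : G → G → ℂ)
    (hPinv : ∀ x ∈ S, IsUnit (P x))
    (hfac : ∀ x ∈ S, ∀ y ∈ S, P x * P y = α x y • P (x * y))
    (hres : ∀ n m : ↥N, P ((n : G) * (m : G)) = P (n : G) * P (m : G))
    (hirr : ∀ W : Submodule ℂ (Fin d → ℂ),
      (∀ n : ↥N, ∀ v ∈ W, (P (n : G)).mulVec v ∈ W) → W = ⊥ ∨ W = ⊤)
    (htr : ∀ n : ↥N, (P (n : G)).trace = θ n)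
    (hleft : ∀ (n : ↥N), ∀ x ∈ S, P ((n : G) * x) = P (n : G) * P x)
    (hright : ∀ (n : ↥N), ∀ x ∈ S, P (x * (n : G)) = P x * P (n : G)) :
    -- (i) conjugation by `g` maps `G_θ` onto itself :
    (∀ x : G, x ∈ S ↔ g * x * g⁻¹ ∈ S) ∧
    -- (ii) `P^{gσ} : x ↦ σ(P (g x g⁻¹))` is a projective representation of `G_θ` with factor
    -- set `(x, y) ↦ σ (α (g x g⁻¹) (g y g⁻¹))`, associated with `θ` :
    ((∀ x ∈ S, IsUnit ((P (g * x * g⁻¹)).map ⇑σ)) ∧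
     (∀ x ∈ S, ∀ y ∈ S,
        (P (g * x * g⁻¹)).map ⇑σ * (P (g * y * g⁻¹)).map ⇑σ =
          σ (α (g * x * g⁻¹) (g * y * g⁻¹)) • (P (g * (x * y) * g⁻¹)).map ⇑σ) ∧
     (∀ n m : ↥N,
        (P (g * ((n : G) * (m : G)) * g⁻¹)).map ⇑σ =
          (P (g * (n : G) * g⁻¹)).map ⇑σ * (P (g * (m : G) * g⁻¹)).map ⇑σ) ∧
     (∀ W : Submodule ℂ (Fin d → ℂ),
        (∀ n : ↥N, ∀ v ∈ W, ((P (g * (n : G) * g⁻¹)).map ⇑σ).mulVec v ∈ W) →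
          W = ⊥ ∨ W = ⊤) ∧
     (∀ n : ↥N, ((P (g * (n : G) * g⁻¹)).map ⇑σ).trace = θ n) ∧
     (∀ (n : ↥N), ∀ x ∈ S,
        (P (g * ((n : G) * x) * g⁻¹)).map ⇑σ =
          (P (g * (n : G) * g⁻¹)).map ⇑σ * (P (g * x * g⁻¹)).map ⇑σ ∧
        (P (g * (x * (n : G)) * g⁻¹)).map ⇑σ =
          (P (g * x * g⁻¹)).map ⇑σ * (P (g * (n : G) * g⁻¹)).map ⇑σ)) ∧
    -- (iii) existence and uniqueness of `μ` :
    (∃ μ : G → ℂ,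
      (∀ x ∈ S, μ x ≠ 0) ∧ μ 1 = 1 ∧
      (∀ (n : ↥N), ∀ x ∈ S, μ ((n : G) * x) = μ x) ∧
      (∃ M : Matrix (Fin d) (Fin d) ℂ, IsUnit M ∧
        ∀ x ∈ S, (P (g * x * g⁻¹)).map ⇑σ = μ x • (M⁻¹ * P x * M)) ∧
      (∀ μ' : G → ℂ, μ' 1 = 1 →
        (∀ (n : ↥N), ∀ x ∈ S, μ' ((n : G) * x) = μ' x) →
        (∃ M' : Matrix (Fin d) (Fin d) ℂ, IsUnit M' ∧
          ∀ x ∈ S, (P (g * x * g⁻¹)).map ⇑σ = μ' x • (M'⁻¹ * P x * M')) →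
        ∀ x ∈ S, μ' x = μ x)) := by
  subst hS
  have : Nonempty (Fin d) := Fin.pos_iff_nonempty.mp hd
  have hP : IsProjectiveRep (charStab N θ) P α := ⟨hPinv, hfac⟩
  have hPθ : IsAssociated N (charStab N θ) θ P := ⟨hres, hirr, htr, hleft, hright⟩
  have hg := mem_normalizer_charStab hgσ
  have hQ := hP.galoisConj hg σ
  have hQθ := hPθ.galoisConj hg hgσ
  have hNH := hPθ.le_charStab (hPθ.map_one (hPinv 1 (charStab N θ).one_mem))
  exact ⟨Subgroup.mem_normalizer_iff.1 hg,
    ⟨hQ.isUnit, hQ.mul_eq_smul, hQθ.map_mul, hQθ.irreducible, hQθ.trace_eq,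
      fun a x hx => ⟨hQθ.mul_left a x hx, hQθ.mul_right a x hx⟩⟩,
    hPθ.exists_unique_smul_conj hNH hQθ hP.isUnit hQ.isUnit⟩

/-- Lemma 1.4 of the paper.  Let `N ⊴ G`, `θ` an irreducible complex character
of `N` with stabilizer `G_θ`, `g ∈ G`, and `σ` a ring automorphism of `ℂ` with `θ^{gσ} = θ`.
Let `P` be a projective representation of `G_θ` associated with `θ`, with factor set `α`.  Then:
(i) conjugation by `g` maps `G_θ` onto itself; (ii) `P^{gσ} : x ↦ σ(P(g x g⁻¹))` is a projective
representation of `G_θ` associated with `θ`, with factor set `(x, y) ↦ σ(α(g x g⁻¹, g y g⁻¹))`;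
(iii) there is a unique function `μ : G_θ → ℂ∖{0}` with `μ 1 = 1`, constant on cosets of `N`,
such that `P^{gσ} = μ • (M⁻¹ * P * M)` for some invertible matrix `M`. -/
theorem projectiveRep_conj_galois_twist
    {G : Type*} [Group G] [Finite G] (N : Subgroup G) (hN : N.Normal)
    (d : ℕ) (hd : 0 < d) (θ : ↥N → ℂ)
    -- `θ` is an irreducible character of `N`, afforded by the representation `ρ` :
    (ρ : ↥N → Matrix (Fin d) (Fin d) ℂ)
    (hρ1 : ρ 1 = 1) (hρmul : ∀ n m : ↥N, ρ (n * m) = ρ n * ρ m)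
    (hρirr : ∀ W : Submodule ℂ (Fin d → ℂ),
      (∀ n : ↥N, ∀ v ∈ W, (ρ n).mulVec v ∈ W) → W = ⊥ ∨ W = ⊤)
    (hρtr : ∀ n : ↥N, (ρ n).trace = θ n)
    -- the stabilizer `G_θ` :
    (S : Set G) (hS : S = charStabSet N hN θ)
    -- `g ∈ G` and the ring automorphism `σ` of `ℂ` satisfy `θ^{gσ} = θ` :
    (g : G) (σ : ℂ ≃+* ℂ)
    (hgσ : ∀ n : ↥N, σ (θ ⟨g * (n : G) * g⁻¹, hN.conj_mem (n : G) n.2 g⟩) = θ n)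
    -- `P` is a projective representation of `G_θ` with factor set `α`, associated with `θ` :
    (P : G → Matrix (Fin d) (Fin d) ℂ) (α : G → G → ℂ)
    (hPinv : ∀ x ∈ S, IsUnit (P x))
    (hα : ∀ x ∈ S, ∀ y ∈ S, α x y ≠ 0)
    (hfac : ∀ x ∈ S, ∀ y ∈ S, P x * P y = α x y • P (x * y))
    (hres : ∀ n m : ↥N, P ((n : G) * (m : G)) = P (n : G) * P (m : G))
    (hirr : ∀ W : Submodule ℂ (Fin d → ℂ),
      (∀ n : ↥N, ∀ v ∈ W, (P (n : G)).mulVec v ∈ W) → W = ⊥ ∨ W = ⊤)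
    (htr : ∀ n : ↥N, (P (n : G)).trace = θ n)
    (hleft : ∀ (n : ↥N), ∀ x ∈ S, P ((n : G) * x) = P (n : G) * P x)
    (hright : ∀ (n : ↥N), ∀ x ∈ S, P (x * (n : G)) = P x * P (n : G)) :
    -- (i) conjugation by `g` maps `G_θ` onto itself :
    (∀ x : G, x ∈ S ↔ g * x * g⁻¹ ∈ S) ∧
    -- (ii) `P^{gσ} : x ↦ σ(P (g x g⁻¹))` is a projective representation of `G_θ` with factor
    -- set `(x, y) ↦ σ (α (g x g⁻¹) (g y g⁻¹))`, associated with `θ` :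
    ((∀ x ∈ S, IsUnit ((P (g * x * g⁻¹)).map ⇑σ)) ∧
     (∀ x ∈ S, ∀ y ∈ S,
        (P (g * x * g⁻¹)).map ⇑σ * (P (g * y * g⁻¹)).map ⇑σ =
          σ (α (g * x * g⁻¹) (g * y * g⁻¹)) • (P (g * (x * y) * g⁻¹)).map ⇑σ) ∧
     (∀ n m : ↥N,
        (P (g * ((n : G) * (m : G)) * g⁻¹)).map ⇑σ =
          (P (g * (n : G) * g⁻¹)).map ⇑σ * (P (g * (m : G) * g⁻¹)).map ⇑σ) ∧
     (∀ W : Submodule ℂ (Fin d → ℂ),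
        (∀ n : ↥N, ∀ v ∈ W, ((P (g * (n : G) * g⁻¹)).map ⇑σ).mulVec v ∈ W) →
          W = ⊥ ∨ W = ⊤) ∧
     (∀ n : ↥N, ((P (g * (n : G) * g⁻¹)).map ⇑σ).trace = θ n) ∧
     (∀ (n : ↥N), ∀ x ∈ S,
        (P (g * ((n : G) * x) * g⁻¹)).map ⇑σ =
          (P (g * (n : G) * g⁻¹)).map ⇑σ * (P (g * x * g⁻¹)).map ⇑σ ∧
        (P (g * (x * (n : G)) * g⁻¹)).map ⇑σ =
          (P (g * x * g⁻¹)).map ⇑σ * (P (g * (n : G) * g⁻¹)).map ⇑σ)) ∧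
    -- (iii) existence and uniqueness of `μ` :
    (∃ μ : G → ℂ,
      (∀ x ∈ S, μ x ≠ 0) ∧ μ 1 = 1 ∧
      (∀ (n : ↥N), ∀ x ∈ S, μ ((n : G) * x) = μ x) ∧
      (∃ M : Matrix (Fin d) (Fin d) ℂ, IsUnit M ∧
        ∀ x ∈ S, (P (g * x * g⁻¹)).map ⇑σ = μ x • (M⁻¹ * P x * M)) ∧
      (∀ μ' : G → ℂ, μ' 1 = 1 →
        (∀ (n : ↥N), ∀ x ∈ S, μ' ((n : G) * x) = μ' x) →
        (∃ M' : Matrix (Fin d) (Fin d) ℂ, IsUnit M' ∧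
          ∀ x ∈ S, (P (g * x * g⁻¹)).map ⇑σ = μ' x • (M'⁻¹ * P x * M')) →
        ∀ x ∈ S, μ' x = μ x)) :=
  projectiveRep_conj_galois_twist_general N hN d hd θ S hS g σ hgσ P α hPinv hfac hres hirr htr
    hleft hright
end

section
/- Let G be a group and A an abelian group, both acting on a set Ω with commuting actions, and let ω ∈ Ω. Assume that for every g ∈ G there exists a ∈ A with g·ω = a·ω. Then the stabilizer Stab_G(ω) is a normal subgroup of G, and the assignment sending the coset g·Stab_G(ω) to the coset a·Stab_A(ω), where a is any element of A with g·ω = a·ω, is a well-defined injective group homomorphism from G/Stab_G(ω) into A/Stab_A(ω). -/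
/-! Since the actions commute, `g • ω = a • ω` and `h • ω = b • ω` give
`(g * h) • ω = g • b • ω = b • g • ω = (b * a) • ω`, so matching each `g` with the `A`-coset of
elements that move `ω` to `g • ω` is a homomorphism into the abelian group `A ⧸ Stab_A(ω)`
(well defined because `A ⧸ Stab_A(ω)` is in bijection with the orbit `A • ω`). Its kernel is
`Stab_G(ω)`, which is therefore normal. -/

open QuotientGroup

namespace MulAction

variable {G A Ω : Type*} [Group G] [MulAction G Ω]

theorem mk_eq_mk_iff_smul_eq [Group A] [MulAction A Ω] {ω : Ω} {a b : A} :
    (a : A ⧸ stabilizer A ω) = b ↔ a • ω = b • ω := by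
  rw [← (injective_ofQuotientStabilizer A ω).eq_iff, ofQuotientStabilizer_mk,
    ofQuotientStabilizer_mk]

theorem mul_smul_eq_mul_smul_of_smul_eq [Monoid A] [MulAction A Ω] [SMulCommClass G A Ω]
    {ω : Ω} {g h : G} {a b : A} (hg : g • ω = a • ω) (hh : h • ω = b • ω) :
    (g * h) • ω = (b * a) • ω := by
  rw [mul_smul, hh, smul_comm, hg, mul_smul]

variable [CommGroup A] [MulAction A Ω] [SMulCommClass G A Ω] {ω : Ω}

noncomputable def toQuotientStabilizer (hcover : ∀ g : G, ∃ a : A, g • ω = a • ω) :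
    G →* A ⧸ stabilizer A ω :=
  MonoidHom.mk' (fun g => (hcover g).choose) fun g h => by
    rw [← QuotientGroup.mk_mul, mul_comm, mk_eq_mk_iff_smul_eq]
    exact (hcover (g * h)).choose_spec.symm.trans
      (mul_smul_eq_mul_smul_of_smul_eq (hcover g).choose_spec (hcover h).choose_spec)

theorem toQuotientStabilizer_apply_of_smul_eq (hcover : ∀ g : G, ∃ a : A, g • ω = a • ω)
    {g : G} {a : A} (h : g • ω = a • ω) : toQuotientStabilizer hcover g = a :=
  mk_eq_mk_iff_smul_eq.mpr ((hcover g).choose_spec.symm.trans h)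

theorem ker_toQuotientStabilizer (hcover : ∀ g : G, ∃ a : A, g • ω = a • ω) :
    (toQuotientStabilizer hcover).ker = stabilizer G ω := by
  ext g
  obtain ⟨a, ha⟩ := hcover g
  rw [MonoidHom.mem_ker, toQuotientStabilizer_apply_of_smul_eq hcover ha, ← QuotientGroup.mk_one,
    mk_eq_mk_iff_smul_eq, one_smul, mem_stabilizer_iff, ha]

end MulAction

/-- Let a group `G` and an abelian group `A` act on a set `Ω` with commuting
actions, and let `ω ∈ Ω`.  If every `G`-translate of `ω` is also an `A`-translate of `ω`, then
`Stab_G(ω)` is normal in `G` and `g ⬝ Stab_G(ω) ↦ a ⬝ Stab_A(ω)` (where `g • ω = a • ω`) is a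
well-defined injective group homomorphism `G/Stab_G(ω) → A/Stab_A(ω)`; equivalently, there is a
homomorphism `φ : G →* A ⧸ Stab_A(ω)` with kernel `Stab_G(ω)` sending `g` to the coset of any
`a` with `g • ω = a • ω`. -/
theorem stabilizer_normal_and_embeds_into_abelian_quotient
    {G A Ω : Type*} [Group G] [CommGroup A] [MulAction G Ω] [MulAction A Ω]
    [SMulCommClass G A Ω] (ω : Ω)
    (hcover : ∀ g : G, ∃ a : A, g • ω = a • ω) :
    (MulAction.stabilizer G ω).Normal ∧
    ∃ φ : G →* A ⧸ MulAction.stabilizer A ω,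
      φ.ker = MulAction.stabilizer G ω ∧
      ∀ (g : G) (a : A), g • ω = a • ω → φ g = QuotientGroup.mk a := by
  have hker := MulAction.ker_toQuotientStabilizer hcover
  exact ⟨hker ▸ MonoidHom.normal_ker _, _, hker,
    fun _ _ => MulAction.toQuotientStabilizer_apply_of_smul_eq hcover⟩
end

section
/- Let G be a group and A an abelian group, both acting on a set Ω with commuting actions, and let ω ∈ Ω. Assume that for every g ∈ G there exists a ∈ A with g·ω = a·ω. Let m be a positive integer. Then for every tuple (x₁,…,x_m) ∈ G^m the following are equivalent: (1) there exists a ∈ A such that x_i·ω = a·ω for every i ∈ {1,…,m}; (2) there exist g ∈ G and s₁,…,s_m ∈ Stab_G(ω) such that x_i = s_i·g for every i ∈ {1,…,m}. -/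
/-! If `g • ω = a • ω`, commutation of the actions gives `(h * g⁻¹) • ω = a⁻¹ • h • ω`, so
`h * g⁻¹` fixes `ω` exactly when `h • ω = a • ω`. Taking `g` to be one of the `x i` gives
(1) ⇒ (2); taking `a` with `g • ω = a • ω` from the covering hypothesis gives (2) ⇒ (1). -/

namespace MulAction

variable {G A Ω : Type*} [Group G] [Group A] [MulAction G Ω] [MulAction A Ω]
  [SMulCommClass G A Ω] {ω : Ω}

theorem mul_inv_mem_stabilizer_iff_of_smul_eq {g h : G} {a : A} (hg : g • ω = a • ω) :
    h * g⁻¹ ∈ stabilizer G ω ↔ h • ω = a • ω := by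
  have hg_inv : g⁻¹ • ω = a⁻¹ • ω := by
    rw [inv_smul_eq_iff, smul_comm, hg, inv_smul_smul]
  rw [mem_stabilizer_iff, mul_smul, hg_inv, smul_comm, inv_smul_eq_iff]

theorem exists_forall_smul_eq_iff_exists_stabilizer_mul {ι : Type*}
    (hcover : ∀ g : G, ∃ a : A, g • ω = a • ω) (x : ι → G) :
    (∃ a : A, ∀ i, x i • ω = a • ω) ↔
      ∃ (g : G) (s : ι → G), (∀ i, s i ∈ stabilizer G ω) ∧ ∀ i, x i = s i * g := by
  constructor
  · rintro ⟨a, hx⟩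
    rcases isEmpty_or_nonempty ι with _ | ⟨⟨i₀⟩⟩
    · exact ⟨1, x, isEmptyElim, isEmptyElim⟩
    · exact ⟨x i₀, fun i => x i * (x i₀)⁻¹,
        fun i => (mul_inv_mem_stabilizer_iff_of_smul_eq (hx i₀)).2 (hx i),
        fun i => (inv_mul_cancel_right _ _).symm⟩
  · rintro ⟨g, s, hs, hx⟩
    obtain ⟨a, hg⟩ := hcover g
    refine ⟨a, fun i => (mul_inv_mem_stabilizer_iff_of_smul_eq hg).1 ?_⟩
    rw [hx i, mul_inv_cancel_right]
    exact hs i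

end MulAction

theorem tuple_in_diag_orbit_iff_stab_mul_diag_general
    {G A Ω : Type*} [Group G] [CommGroup A] [MulAction G Ω] [MulAction A Ω]
    [SMulCommClass G A Ω] (ω : Ω)
    (hcover : ∀ g : G, ∃ a : A, g • ω = a • ω)
    (m : ℕ) (x : Fin m → G) :
    (∃ a : A, ∀ i : Fin m, x i • ω = a • ω) ↔
      (∃ (g : G) (s : Fin m → G),
        (∀ i, s i ∈ MulAction.stabilizer G ω) ∧ ∀ i, x i = s i * g) :=
  MulAction.exists_forall_smul_eq_iff_exists_stabilizer_mul hcover x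

/-- Let a group `G` and an abelian group `A` act on a set `Ω` with commuting
actions, `ω ∈ Ω`, and assume every `G`-translate of `ω` is an `A`-translate of `ω`.  For a tuple
`(x₁, …, x_m) ∈ G^m` the following are equivalent: (1) there is `a ∈ A` with `x_i • ω = a • ω`
for all `i`; (2) there are `g ∈ G` and `s₁, …, s_m ∈ Stab_G(ω)` with `x_i = s_i * g` for all
`i`. -/
theorem tuple_in_diag_orbit_iff_stab_mul_diag
    {G A Ω : Type*} [Group G] [CommGroup A] [MulAction G Ω] [MulAction A Ω]
    [SMulCommClass G A Ω] (ω : Ω)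
    (hcover : ∀ g : G, ∃ a : A, g • ω = a • ω)
    (m : ℕ) (hm : 0 < m) (x : Fin m → G) :
    (∃ a : A, ∀ i : Fin m, x i • ω = a • ω) ↔
      (∃ (g : G) (s : Fin m → G),
        (∀ i, s i ∈ MulAction.stabilizer G ω) ∧ ∀ i, x i = s i * g) :=
  tuple_in_diag_orbit_iff_stab_mul_diag_general ω hcover m x
end
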